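/- Let Ω ⊆ ℝ² be open, v ∈ C^∞(Ω), β ∈ ℝ, and ε > 0. Define G_ε : Ω → ℝ² by G_ε(x) = (|Dv(x)|² + ε)^{β/2} Dv(x). Then at every point of Ω: −det DG_ε = (1/2)(|Dv|² + ε)^{β} (|D²v|² − (Δv)²) + β (|Dv|² + ε)^{β−1} (|D²v Dv|² − (Δv)(Δ∞v)). Moreover, if |Dv| > 0 everywhere in Ω, the same identity holds with ε = 0. -/

import Mathlib

open Real MeasureTheory
open scoped RealInnerProductSpace

noncomputable section

/-- The Euclidean plane ℝ². -/
abbrev E2 : Type := EuclideanSpace ℝ (Fin 2)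

/-- Standard basis vector. -/
def ee (i : Fin 2) : E2 := EuclideanSpace.single i (1 : ℝ)

/-- Partial derivative ∂ᵢf. -/
def pd (i : Fin 2) (f : E2 → ℝ) (x : E2) : ℝ := fderiv ℝ f x (ee i)

/-- Second partial derivative ∂ᵢ∂ⱼf. -/
def pd2 (i j : Fin 2) (f : E2 → ℝ) (x : E2) : ℝ := pd i (pd j f) x

/-- |Df|², squared Euclidean norm of the gradient. -/
def gradSq (f : E2 → ℝ) (x : E2) : ℝ := (pd 0 f x) ^ 2 + (pd 1 f x) ^ 2

/-- |Df|, Euclidean norm of the gradient. -/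
def gradNorm (f : E2 → ℝ) (x : E2) : ℝ := Real.sqrt (gradSq f x)

/-- Laplacian Δf = tr D²f. -/
def lap (f : E2 → ℝ) (x : E2) : ℝ := pd2 0 0 f x + pd2 1 1 f x

/-- ∞-Laplacian Δ∞f = D²f Df · Df. -/
def infLap (f : E2 → ℝ) (x : E2) : ℝ :=
  pd2 0 0 f x * pd 0 f x * pd 0 f x + pd2 0 1 f x * pd 0 f x * pd 1 f x +
  pd2 1 0 f x * pd 1 f x * pd 0 f x + pd2 1 1 f x * pd 1 f x * pd 1 f x

/-- |D²f|², squared Frobenius norm of the Hessian. -/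
def hessFrobSq (f : E2 → ℝ) (x : E2) : ℝ :=
  (pd2 0 0 f x) ^ 2 + (pd2 0 1 f x) ^ 2 + (pd2 1 0 f x) ^ 2 + (pd2 1 1 f x) ^ 2

/-- det D²f, determinant of the Hessian. -/
def detHess (f : E2 → ℝ) (x : E2) : ℝ :=
  pd2 0 0 f x * pd2 1 1 f x - pd2 0 1 f x * pd2 1 0 f x

/-- |D²f Df|². -/
def hessGradSq (f : E2 → ℝ) (x : E2) : ℝ :=
  (pd2 0 0 f x * pd 0 f x + pd2 0 1 f x * pd 1 f x) ^ 2 +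
  (pd2 1 0 f x * pd 0 f x + pd2 1 1 f x * pd 1 f x) ^ 2

/-- Jacobian determinant of the planar map with components `F 0`, `F 1`. -/
def jdet (F : Fin 2 → E2 → ℝ) (x : E2) : ℝ :=
  pd 0 (F 0) x * pd 1 (F 1) x - pd 1 (F 0) x * pd 0 (F 1) x

/-- Squared Frobenius norm of the Jacobian of the planar map with components `F 0`, `F 1`. -/
def jFrobSq (F : Fin 2 → E2 → ℝ) (x : E2) : ℝ :=
  (pd 0 (F 0) x) ^ 2 + (pd 1 (F 0) x) ^ 2 + (pd 0 (F 1) x) ^ 2 + (pd 1 (F 1) x) ^ 2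

/-- Df · Dg. -/
def gradDot (f g : E2 → ℝ) (x : E2) : ℝ :=
  pd 0 f x * pd 0 g x + pd 1 f x * pd 1 g x

/-- D²ψ Dv · Dv. -/
def hessQuad (ψ v : E2 → ℝ) (x : E2) : ℝ :=
  pd2 0 0 ψ x * pd 0 v x * pd 0 v x + pd2 0 1 ψ x * pd 0 v x * pd 1 v x +
  pd2 1 0 ψ x * pd 1 v x * pd 0 v x + pd2 1 1 ψ x * pd 1 v x * pd 1 v x

/-- (D²v Dv) · Dψ. -/
def hessGradDot (v ψ : E2 → ℝ) (x : E2) : ℝ :=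
  (pd2 0 0 v x * pd 0 v x + pd2 0 1 v x * pd 1 v x) * pd 0 ψ x +
  (pd2 1 0 v x * pd 0 v x + pd2 1 1 v x * pd 1 v x) * pd 1 ψ x

/-- Smooth compactly supported test function on Ω. -/
def IsTestOn (ψ : E2 → ℝ) (Ω : Set E2) : Prop :=
  ContDiff ℝ (⊤ : ℕ∞) ψ ∧ HasCompactSupport ψ ∧ tsupport ψ ⊆ Ω

/-- Components of W = |Dv|⁻¹ Dv. -/
def Wcomp (v : E2 → ℝ) (i : Fin 2) : E2 → ℝ := fun y => (gradNorm v y)⁻¹ * pd i v y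

/-! With `φ = (|Dv|² + c)^{β/2}` the Jacobian of `φ Dv` is the rank-one update `φ H + Dv ⊗ Dφ`
of the symmetric Hessian `H`, so its determinant is `φ² det H + φ (Δv Dv·Dφ − H Dv·Dφ)`
(Cayley–Hamilton: `adj H = (tr H) I − H`). The chain rule gives `Dφ = β (|Dv|² + c)^{β/2−1} H Dv`,
turning the bracket into `Δv Δ∞v − |H Dv|²`, while `−2 det H = |H|² − (Δv)²`.
Only `|Dv|² + c > 0` at the point is needed, which covers both `c = ε > 0` and `c = 0`. -/

section PlanarCalculus

variable {v f g : E2 → ℝ} {x : E2}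

theorem pd_mul (hf : DifferentiableAt ℝ f x) (hg : DifferentiableAt ℝ g x) (i : Fin 2) :
    pd i (fun y => f y * g y) x = f x * pd i g x + g x * pd i f x := by
  simp [pd, fderiv_fun_mul hf hg]

theorem pd_rpow_const (hf : DifferentiableAt ℝ f x) (hfx : f x ≠ 0) (p : ℝ) (i : Fin 2) :
    pd i (fun y => f y ^ p) x = p * f x ^ (p - 1) * pd i f x := by
  simp [pd, (hf.hasFDerivAt.rpow_const (Or.inl hfx)).fderiv, mul_assoc]

theorem differentiableAt_fderiv_of_contDiffAt_two (hv : ContDiffAt ℝ 2 v x) :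
    DifferentiableAt ℝ (fderiv ℝ v) x :=
  (hv.fderiv_right (m := 1) (by norm_num)).differentiableAt one_ne_zero

theorem differentiableAt_pd (hv : ContDiffAt ℝ 2 v x) (j : Fin 2) :
    DifferentiableAt ℝ (pd j v) x :=
  (differentiableAt_fderiv_of_contDiffAt_two hv).clm_apply (differentiableAt_const _)

theorem pd2_eq_fderiv_fderiv (hv : ContDiffAt ℝ 2 v x) (i j : Fin 2) :
    pd2 i j v x = fderiv ℝ (fderiv ℝ v) x (ee i) (ee j) := by
  change fderiv ℝ (fun y => fderiv ℝ v y (ee j)) x (ee i) = _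
  simp [fderiv_clm_apply (differentiableAt_fderiv_of_contDiffAt_two hv)
    (differentiableAt_const _)]

theorem pd2_comm (hv : ContDiffAt ℝ 2 v x) : pd2 1 0 v x = pd2 0 1 v x := by
  rw [pd2_eq_fderiv_fderiv hv, pd2_eq_fderiv_fderiv hv]
  exact hv.isSymmSndFDerivAt (by simp) _ _

theorem pd_gradSq_add (hv : ContDiffAt ℝ 2 v x) (c : ℝ) (i : Fin 2) :
    pd i (fun y => gradSq v y + c) x
      = 2 * (pd2 i 0 v x * pd 0 v x + pd2 i 1 v x * pd 1 v x) := by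
  have h : HasFDerivAt (fun y => gradSq v y + c) _ x :=
    (((differentiableAt_pd hv 0).hasFDerivAt.pow 2).add
      ((differentiableAt_pd hv 1).hasFDerivAt.pow 2)).add_const c
  rw [pd, h.fderiv]
  simp [pd2, pd]
  ring

theorem differentiableAt_gradSq (hv : ContDiffAt ℝ 2 v x) : DifferentiableAt ℝ (gradSq v) x := by
  have := differentiableAt_pd hv
  unfold gradSq
  fun_prop

theorem pd_rpow_gradSq_add (hv : ContDiffAt ℝ 2 v x) {c : ℝ} (hc : 0 < gradSq v x + c)
    (p : ℝ) (i : Fin 2) :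
    pd i (fun y => (gradSq v y + c) ^ p) x
      = 2 * p * (gradSq v x + c) ^ (p - 1) * (pd2 i 0 v x * pd 0 v x + pd2 i 1 v x * pd 1 v x) := by
  rw [pd_rpow_const ((differentiableAt_gradSq hv).add_const c) hc.ne', pd_gradSq_add hv]
  ring

theorem hessFrobSq_sub_lap_sq (hv : ContDiffAt ℝ 2 v x) :
    hessFrobSq v x - lap v x ^ 2 = -2 * detHess v x := by
  rw [hessFrobSq, lap, detHess, pd2_comm hv]
  ring

theorem jdet_mul_pd (hf : DifferentiableAt ℝ f x) (hv : ContDiffAt ℝ 2 v x) :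
    jdet (fun i y => f y * pd i v y) x
      = f x ^ 2 * detHess v x + f x * (lap v x * gradDot v f x - hessGradDot v f x) := by
  have hsymm := pd2_comm hv
  simp only [jdet, pd_mul hf (differentiableAt_pd hv _)]
  simp only [detHess, lap, gradDot, hessGradDot, pd2] at hsymm ⊢
  rw [hsymm]
  ring

end PlanarCalculus

theorem neg_jdet_rpow_gradSq_add_mul_pd {v : E2 → ℝ} {x : E2} (hv : ContDiffAt ℝ 2 v x)
    (β : ℝ) {c : ℝ} (hc : 0 < gradSq v x + c) :
    -jdet (fun i y => (gradSq v y + c) ^ (β / 2) * pd i v y) x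
      = (1/2) * (gradSq v x + c) ^ β * (hessFrobSq v x - (lap v x) ^ 2)
        + β * (gradSq v x + c) ^ (β - 1) * (hessGradSq v x - lap v x * infLap v x) := by
  set G := gradSq v x + c
  have hφ : DifferentiableAt ℝ (fun y => (gradSq v y + c) ^ (β / 2)) x :=
    ((differentiableAt_gradSq hv).add_const c).rpow_const (Or.inl hc.ne')
  have hdot : gradDot v (fun y => (gradSq v y + c) ^ (β / 2)) x
      = β * G ^ (β / 2 - 1) * infLap v x := by
    simp only [gradDot, pd_rpow_gradSq_add hv hc, infLap]
    ring
  have hhess : hessGradDot v (fun y => (gradSq v y + c) ^ (β / 2)) x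
      = β * G ^ (β / 2 - 1) * hessGradSq v x := by
    simp only [hessGradDot, pd_rpow_gradSq_add hv hc, hessGradSq]
    ring
  have hpow : G ^ β = (G ^ (β / 2)) ^ 2 := by
    rw [← Real.rpow_natCast, ← Real.rpow_mul hc.le]
    norm_num
  have hpow' : G ^ (β - 1) = G ^ (β / 2) * G ^ (β / 2 - 1) := by
    rw [← Real.rpow_add hc]
    ring_nf
  rw [jdet_mul_pd hφ hv, hdot, hhess, hessFrobSq_sub_lap_sq hv, hpow, hpow']
  ring

/-- pointwise structural identity for −det D[(|Dv|²+ε)^{β/2}Dv],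
and the same identity with ε = 0 when |Dv| > 0 everywhere. -/
theorem stmt_4 (Ω : Set E2) (hΩ : IsOpen Ω) (v : E2 → ℝ)
    (hv : ContDiffOn ℝ (⊤ : ℕ∞) v Ω) (β : ℝ) (ε : ℝ) (hε : 0 < ε) :
    (∀ x ∈ Ω,
      -jdet (fun i y => (gradSq v y + ε) ^ (β/2) * pd i v y) x
        = (1/2) * (gradSq v x + ε) ^ β * (hessFrobSq v x - (lap v x) ^ 2)
          + β * (gradSq v x + ε) ^ (β - 1) * (hessGradSq v x - lap v x * infLap v x)) ∧
    ((∀ x ∈ Ω, 0 < gradNorm v x) →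
      ∀ x ∈ Ω,
      -jdet (fun i y => (gradSq v y) ^ (β/2) * pd i v y) x
        = (1/2) * (gradSq v x) ^ β * (hessFrobSq v x - (lap v x) ^ 2)
          + β * (gradSq v x) ^ (β - 1) * (hessGradSq v x - lap v x * infLap v x)) := by
  have hv2 : ∀ x ∈ Ω, ContDiffAt ℝ 2 v x := fun x hx =>
    (hv.contDiffAt (hΩ.mem_nhds hx)).of_le (WithTop.coe_le_coe.mpr le_top)
  refine ⟨fun x hx => neg_jdet_rpow_gradSq_add_mul_pd (hv2 x hx) β ?_, fun hpos x hx => ?_⟩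
  · exact add_pos_of_nonneg_of_pos (by rw [gradSq]; positivity) hε
  · have hgrad : 0 < gradSq v x + 0 := by
      simpa using Real.sqrt_pos.mp (hpos x hx)
    simpa using neg_jdet_rpow_gradSq_add_mul_pd (hv2 x hx) β hgrad
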